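/- Let k be a field and let Λ be the exterior algebra over k of a 2-dimensional k-vector space. The group of k-algebra automorphisms of Λ is isomorphic, as a group, to the semidirect product k² ⋊ GL₂(k), where B ∈ GL₂(k) acts on the additive group k² by v ↦ (det B)⁻¹ · (B v). -/
import Mathlib

open ExteriorAlgebra Matrix

namespace AutExtAux

variable (k : Type) [Field k]

local notation "Λ" => ExteriorAlgebra k (Fin 2 → k)

noncomputable def ee (i : Fin 2) : Fin 2 → k := Pi.single i 1

noncomputable def ω : Λ := ι k (ee k 0) * ι k (ee k 1)

lemma omega_def : ω k = ι k (ee k 0) * ι k (ee k 1) := rfl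

variable {k}

lemma vec_decomp (v : Fin 2 → k) : v = v 0 • ee k 0 + v 1 • ee k 1 := by
  funext i
  fin_cases i <;> simp [ee, Pi.single_apply]

lemma iota_mul (u v : Fin 2 → k) :
    ι k u * ι k v = (u 0 * v 1 - u 1 * v 0) • ω k := by
  have swap : ι k (ee k 1) * ι k (ee k 0) = -(ι k (ee k 0) * ι k (ee k 1)) :=
    eq_neg_of_add_eq_zero_left (ι_add_mul_swap (ee k 1) (ee k 0))
  conv_lhs => rw [vec_decomp u, vec_decomp v]
  simp only [map_add, _root_.map_smul, add_mul, mul_add, smul_mul_assoc, mul_smul_comm,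
    ι_sq_zero, smul_zero, swap, omega_def, smul_smul]
  module

lemma omega_mul_e1 : (ω k) * ι k (ee k 1) = 0 := by
  rw [omega_def, mul_assoc, ι_sq_zero, mul_zero]

lemma iota_mul_omega (v : Fin 2 → k) : ι k v * ω k = 0 := by
  have h1 : ι k v * ι k (ee k 0) = (-(v 1)) • ω k := by
    have := iota_mul v (ee k 0)
    simpa [ee, Pi.single_apply] using this
  rw [omega_def, ← mul_assoc, h1, smul_mul_assoc, omega_mul_e1, smul_zero]

lemma omega_mul_iota (v : Fin 2 → k) : ω k * ι k v = 0 := by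
  have h1 : ι k (ee k 1) * ι k v = (-(v 0)) • ω k := by
    have := iota_mul (ee k 1) v
    simpa [ee, Pi.single_apply] using this
  rw [omega_def, mul_assoc, h1, mul_smul_comm, iota_mul_omega, smul_zero]

lemma omega_sq : (ω k) * ω k = 0 := by
  rw [omega_def, mul_assoc, ← omega_def, iota_mul_omega, mul_zero]

end AutExtAux

namespace AutExtAux

variable (k : Type) [Field k]

local notation "Λ" => ExteriorAlgebra k (Fin 2 → k)

/-- Left-regular-representation matrices for `ι e₀` and `ι e₁`. -/
noncomputable def XX : Matrix (Fin 4) (Fin 4) k := !![0,0,0,0; 1,0,0,0; 0,0,0,0; 0,0,1,0]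
noncomputable def YY : Matrix (Fin 4) (Fin 4) k := !![0,0,0,0; 0,0,0,0; 1,0,0,0; 0,-1,0,0]

noncomputable def repf : (Fin 2 → k) →ₗ[k] Matrix (Fin 4) (Fin 4) k where
  toFun v := v 0 • XX k + v 1 • YY k
  map_add' u v := by simp [add_smul]; abel
  map_smul' c v := by simp [smul_smul, smul_add]

lemma repf_cond (v : Fin 2 → k) : repf k v * repf k v = 0 := by
  show (v 0 • XX k + v 1 • YY k) * (v 0 • XX k + v 1 • YY k) = 0
  ext i j
  fin_cases i <;> fin_cases j <;>
    simp [XX, YY, Matrix.mul_apply, Fin.sum_univ_four, Matrix.add_apply] <;> ring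

noncomputable def rho : Λ →ₐ[k] Matrix (Fin 4) (Fin 4) k :=
  lift k ⟨repf k, repf_cond k⟩

variable {k}

lemma rho_iota (v : Fin 2 → k) : rho k (ι k v) = v 0 • XX k + v 1 • YY k := by
  have := lift_ι_apply (R := k) (repf k) (repf_cond k) v
  exact this

lemma rho_omega : rho k (ω k) = XX k * YY k := by
  rw [omega_def, _root_.map_mul, rho_iota, rho_iota]
  simp [ee, Pi.single_apply]

lemma indep {a c : k} {v : Fin 2 → k}
    (h : a • (1 : Λ) + ι k v + c • ω k = 0) : a = 0 ∧ v = 0 ∧ c = 0 := by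
  have h2 := congrArg (rho k) h
  rw [map_add, map_add] at h2
  rw [_root_.map_smul, _root_.map_smul, _root_.map_one, rho_iota, rho_omega, _root_.map_zero] at h2
  have e00 := congrFun (congrFun h2 0) 0
  have e10 := congrFun (congrFun h2 1) 0
  have e20 := congrFun (congrFun h2 2) 0
  have e30 := congrFun (congrFun h2 3) 0
  simp [XX, YY, Matrix.mul_apply, Fin.sum_univ_four, Matrix.add_apply, Matrix.one_apply] at e00 e10 e20 e30
  refine ⟨e00, ?_, e30⟩
  funext i; fin_cases i <;> simpa using ‹_›

lemma exists_decomp (x : Λ) : ∃ (a : k) (v : Fin 2 → k) (c : k), x = a • (1 : Λ) + ι k v + c • ω k := by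
  induction x using ExteriorAlgebra.induction with
  | algebraMap r => exact ⟨r, 0, 0, by simp [Algebra.algebraMap_eq_smul_one]⟩
  | ι v => exact ⟨0, v, 0, by simp⟩
  | add x y hx hy =>
    obtain ⟨a, v, c, rfl⟩ := hx
    obtain ⟨b, u, d, rfl⟩ := hy
    refine ⟨a + b, v + u, c + d, ?_⟩
    rw [LinearMap.map_add]
    module
  | mul x y hx hy =>
    obtain ⟨a, v, c, rfl⟩ := hx
    obtain ⟨b, u, d, rfl⟩ := hy
    refine ⟨a * b, a • u + b • v, a * d + c * b + (v 0 * u 1 - v 1 * u 0), ?_⟩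
    simp only [add_mul, mul_add, smul_mul_assoc, mul_smul_comm, one_mul, mul_one,
      iota_mul, iota_mul_omega, omega_mul_iota, omega_sq, smul_zero, map_add,
      _root_.map_smul, smul_smul]
    module

end AutExtAux

namespace AutExtAux

variable (k : Type) [Field k]

local notation "Λ" => ExteriorAlgebra k (Fin 2 → k)

variable {k}

/-- The linear map underlying the algebra endomorphism attached to `(w, B)`. -/
noncomputable def gf (w : Fin 2 → k) (B : Matrix (Fin 2) (Fin 2) k) :
    (Fin 2 → k) →ₗ[k] Λ where
  toFun v := ι k (B.mulVec v) + (w ⬝ᵥ v) • ω k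
  map_add' u v := by
    rw [Matrix.mulVec_add, LinearMap.map_add, dotProduct_add, add_smul]
    abel
  map_smul' c v := by
    rw [Matrix.mulVec_smul, LinearMap.map_smul, dotProduct_smul, RingHom.id_apply,
      smul_add, smul_smul, smul_eq_mul]

lemma gf_cond (w : Fin 2 → k) (B : Matrix (Fin 2) (Fin 2) k) (v : Fin 2 → k) :
    gf w B v * gf w B v = 0 := by
  show (ι k (B.mulVec v) + (w ⬝ᵥ v) • ω k) * (ι k (B.mulVec v) + (w ⬝ᵥ v) • ω k) = 0
  rw [add_mul, mul_add, mul_add, ι_sq_zero, mul_smul_comm, iota_mul_omega, smul_zero,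
    smul_mul_assoc, omega_mul_iota, smul_zero, smul_mul_assoc, mul_smul_comm, omega_sq]
  simp

/-- The algebra endomorphism of `Λ` attached to `(w, B)`. -/
noncomputable def Phi (w : Fin 2 → k) (B : Matrix (Fin 2) (Fin 2) k) : Λ →ₐ[k] Λ :=
  lift k ⟨gf w B, gf_cond w B⟩

lemma Phi_iota (w : Fin 2 → k) (B : Matrix (Fin 2) (Fin 2) k) (v : Fin 2 → k) :
    Phi w B (ι k v) = ι k (B.mulVec v) + (w ⬝ᵥ v) • ω k := by
  have := lift_ι_apply (R := k) (gf w B) (gf_cond w B) v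
  exact this

lemma Phi_omega (w : Fin 2 → k) (B : Matrix (Fin 2) (Fin 2) k) :
    Phi w B (ω k) = B.det • ω k := by
  rw [omega_def, _root_.map_mul, Phi_iota, Phi_iota]
  rw [add_mul, mul_add, mul_add, mul_smul_comm, iota_mul_omega, smul_zero,
    smul_mul_assoc, omega_mul_iota, smul_zero, smul_mul_assoc, mul_smul_comm, omega_sq,
    smul_zero, smul_zero, add_zero, add_zero, add_zero, iota_mul, Matrix.det_fin_two]
  congr 1
  simp [ee, Matrix.mulVec_single, mul_comm]

lemma Phi_comp (w w' : Fin 2 → k) (B B' : Matrix (Fin 2) (Fin 2) k) :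
    (Phi w B).comp (Phi w' B') = Phi (B'ᵀ.mulVec w + B.det • w') (B * B') := by
  apply ExteriorAlgebra.hom_ext
  apply LinearMap.ext
  intro v
  show Phi w B (Phi w' B' (ι k v)) = Phi (B'ᵀ.mulVec w + B.det • w') (B * B') (ι k v)
  rw [Phi_iota, map_add, _root_.map_smul, Phi_iota, Phi_omega, Phi_iota,
    Matrix.mulVec_mulVec, add_dotProduct, smul_dotProduct,
    Matrix.mulVec_transpose, ← Matrix.dotProduct_mulVec, add_smul, smul_smul, smul_eq_mul]
  module

lemma Phi_one : Phi (0 : Fin 2 → k) (1 : Matrix (Fin 2) (Fin 2) k) = AlgHom.id k Λ := by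
  apply ExteriorAlgebra.hom_ext
  apply LinearMap.ext
  intro v
  show Phi 0 1 (ι k v) = ι k v
  rw [Phi_iota, Matrix.one_mulVec, zero_dotProduct, zero_smul, add_zero]

end AutExtAux

namespace AutExtAux

variable (k : Type) [Field k]

local notation "Λ" => ExteriorAlgebra k (Fin 2 → k)
local notation "GL2" => Matrix.GeneralLinearGroup (Fin 2) k

/-- The action of `GL₂(k)` on `k²` given by `v ↦ (det B)⁻¹ • (B v)`. -/
noncomputable def act : GL2 →* MulAut (Multiplicative (Fin 2 → k)) where
  toFun B :=
    { toFun := fun n => Multiplicative.ofAdd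
        (((B : Matrix (Fin 2) (Fin 2) k).det)⁻¹ •
          (B : Matrix (Fin 2) (Fin 2) k).mulVec n.toAdd)
      invFun := fun n => Multiplicative.ofAdd
        (((B : Matrix (Fin 2) (Fin 2) k).det) •
          ((B⁻¹ : GL2) : Matrix (Fin 2) (Fin 2) k).mulVec n.toAdd)
      left_inv := by
        intro n
        simp only [toAdd_ofAdd, Matrix.mulVec_smul, smul_smul]
        rw [Matrix.mulVec_mulVec]
        have hdet : (B : Matrix (Fin 2) (Fin 2) k).det ≠ 0 := by
          have := Matrix.isUnit_iff_isUnit_det (B : Matrix (Fin 2) (Fin 2) k)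
          exact (isUnit_iff_ne_zero.mp (this.mp B.isUnit))
        have hBB : ((B⁻¹ : GL2) : Matrix (Fin 2) (Fin 2) k) *
            (B : Matrix (Fin 2) (Fin 2) k) = 1 := by
          rw [← Units.val_mul, inv_mul_cancel, Units.val_one]
        rw [hBB, mul_inv_cancel₀ hdet, one_smul, Matrix.one_mulVec]
        rfl
      right_inv := by
        intro n
        simp only [toAdd_ofAdd, Matrix.mulVec_smul, smul_smul]
        rw [Matrix.mulVec_mulVec]
        have hdet : (B : Matrix (Fin 2) (Fin 2) k).det ≠ 0 := by
          have := Matrix.isUnit_iff_isUnit_det (B : Matrix (Fin 2) (Fin 2) k)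
          exact (isUnit_iff_ne_zero.mp (this.mp B.isUnit))
        have hBB : (B : Matrix (Fin 2) (Fin 2) k) *
            ((B⁻¹ : GL2) : Matrix (Fin 2) (Fin 2) k) = 1 := by
          rw [← Units.val_mul, mul_inv_cancel, Units.val_one]
        rw [hBB, inv_mul_cancel₀ hdet, one_smul, Matrix.one_mulVec]
        rfl
      map_mul' := by
        intro n n'
        simp only [toAdd_mul, Matrix.mulVec_add, smul_add]
        rfl }
  map_one' := by
    ext n
    simp [Matrix.one_mulVec]
  map_mul' := by
    intro B B'
    ext n
    simp only [MulEquiv.coe_mk, Equiv.coe_fn_mk, MulAut.mul_def, MulEquiv.trans_apply,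
      Function.comp_apply]
    congr 1
    simp only [toAdd_ofAdd, Units.val_mul, Matrix.mulVec_smul, Matrix.mulVec_mulVec,
      Matrix.det_mul, mul_inv, smul_smul]

end AutExtAux

namespace AutExtAux

variable (k : Type) [Field k]

local notation "Λ" => ExteriorAlgebra k (Fin 2 → k)
local notation "GL2" => Matrix.GeneralLinearGroup (Fin 2) k
local notation "G" => SemidirectProduct (Multiplicative (Fin 2 → k)) GL2 (act k)

variable {k}

lemma act_apply (B : GL2) (v : Fin 2 → k) :
    act k B (Multiplicative.ofAdd v) = Multiplicative.ofAdd
      (((B : Matrix (Fin 2) (Fin 2) k).det)⁻¹ •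
        (B : Matrix (Fin 2) (Fin 2) k).mulVec v) := rfl

/-- The translation part attached to a semidirect-product element. -/
noncomputable def Wg (g : G) : Fin 2 → k :=
  ((g.right⁻¹ : GL2) : Matrix (Fin 2) (Fin 2) k).mulVec g.left.toAdd

/-- The matrix part attached to a semidirect-product element. -/
noncomputable def Bg (g : G) : Matrix (Fin 2) (Fin 2) k :=
  ((g.right⁻¹ : GL2) : Matrix (Fin 2) (Fin 2) k)ᵀ

lemma det_coe_ne_zero (h : GL2) : ((h : Matrix (Fin 2) (Fin 2) k)).det ≠ 0 :=
  isUnit_iff_ne_zero.mp ((Matrix.isUnit_iff_isUnit_det _).mp h.isUnit)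

lemma coe_inv_det (h : GL2) :
    (((h⁻¹ : GL2) : Matrix (Fin 2) (Fin 2) k)).det =
      (((h : GL2) : Matrix (Fin 2) (Fin 2) k)).det⁻¹ := by
  rw [Matrix.coe_units_inv, Matrix.det_nonsing_inv, Ring.inverse_eq_inv]

lemma Bg_mul (g g' : G) : Bg (g * g') = Bg g * Bg g' := by
  unfold Bg
  rw [SemidirectProduct.mul_right, _root_.mul_inv_rev, Units.val_mul, Matrix.transpose_mul]

lemma Wg_mul (g g' : G) :
    Wg (g * g') = (Bg g')ᵀ.mulVec (Wg g) + (Bg g).det • Wg g' := by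
  unfold Wg Bg
  rw [SemidirectProduct.mul_right, SemidirectProduct.mul_left, _root_.mul_inv_rev, Units.val_mul,
    Matrix.transpose_transpose, Matrix.det_transpose, coe_inv_det]
  have : Multiplicative.toAdd (g.left * (act k g.right) g'.left)
      = g.left.toAdd + ((g.right : Matrix (Fin 2) (Fin 2) k).det)⁻¹ •
        (g.right : Matrix (Fin 2) (Fin 2) k).mulVec g'.left.toAdd := rfl
  rw [this, Matrix.mulVec_add, ← Matrix.mulVec_mulVec, Matrix.mulVec_smul]
  congr 1
  have hBB : ((g.right⁻¹ : GL2) : Matrix (Fin 2) (Fin 2) k) *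
      (g.right : Matrix (Fin 2) (Fin 2) k) = 1 := by
    rw [← Units.val_mul, inv_mul_cancel, Units.val_one]
  rw [Matrix.mulVec_mulVec, mul_assoc, hBB, mul_one]

lemma Wg_one : Wg (1 : G) = 0 := by
  unfold Wg
  rw [SemidirectProduct.one_right, SemidirectProduct.one_left, inv_one]
  show _ = (0 : Fin 2 → k)
  have : Multiplicative.toAdd (1 : Multiplicative (Fin 2 → k)) = 0 := rfl
  rw [this, Matrix.mulVec_zero]

lemma Bg_one : Bg (1 : G) = 1 := by
  unfold Bg
  rw [SemidirectProduct.one_right, inv_one, Units.val_one, Matrix.transpose_one]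

end AutExtAux

namespace AutExtAux

variable (k : Type) [Field k]

local notation "Λ" => ExteriorAlgebra k (Fin 2 → k)
local notation "GL2" => Matrix.GeneralLinearGroup (Fin 2) k
local notation "G" => SemidirectProduct (Multiplicative (Fin 2 → k)) GL2 (act k)

variable {k}

lemma Phi_g_comp (g g' : G) :
    (Phi (Wg g) (Bg g)).comp (Phi (Wg g') (Bg g')) = Phi (Wg (g * g')) (Bg (g * g')) := by
  rw [Phi_comp, Wg_mul, Bg_mul]

/-- The algebra automorphism attached to a semidirect-product element. -/
noncomputable def Psi (g : G) : Λ ≃ₐ[k] Λ :=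
  AlgEquiv.ofAlgHom (Phi (Wg g) (Bg g)) (Phi (Wg g⁻¹) (Bg g⁻¹))
    (by rw [Phi_g_comp, mul_inv_cancel]
        rw [Wg_one, Bg_one, Phi_one])
    (by rw [Phi_g_comp, inv_mul_cancel]
        rw [Wg_one, Bg_one, Phi_one])

lemma Psi_apply (g : G) (x : Λ) : Psi g x = Phi (Wg g) (Bg g) x := rfl

/-- `Psi` as a monoid homomorphism. -/
noncomputable def PsiHom : G →* (Λ ≃ₐ[k] Λ) where
  toFun := Psi
  map_one' := by
    apply AlgEquiv.ext
    intro x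
    rw [Psi_apply, Wg_one, Bg_one, Phi_one]
    rfl
  map_mul' := by
    intro g g'
    apply AlgEquiv.ext
    intro x
    rw [AlgEquiv.mul_apply, Psi_apply, Psi_apply, Psi_apply, ← Phi_g_comp]
    rfl

lemma dotProduct_single_one (w : Fin 2 → k) (j : Fin 2) :
    w ⬝ᵥ (Pi.single j 1 : Fin 2 → k) = w j := by
  simp [dotProduct, Pi.single_apply, Finset.sum_ite_eq]

lemma PsiHom_injective : Function.Injective (PsiHom (k := k)) := by
  rw [injective_iff_map_eq_one]
  intro g hg
  have key : ∀ v : Fin 2 → k, (Bg g).mulVec v = v ∧ Wg g ⬝ᵥ v = 0 := by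
    intro v
    have h1 : Psi g (ι k v) = ι k v := by
      rw [show Psi g = PsiHom g from rfl, hg]; rfl
    rw [Psi_apply, Phi_iota] at h1
    have h2 : (0 : k) • (1 : Λ) + ι k ((Bg g).mulVec v - v) + (Wg g ⬝ᵥ v) • ω k = 0 := by
      rw [LinearMap.map_sub, zero_smul, zero_add]
      rw [sub_add_eq_add_sub, h1]
      abel
    obtain ⟨-, h3, h4⟩ := indep h2
    exact ⟨by rwa [sub_eq_zero] at h3, h4⟩
  have hB : Bg g = 1 := by
    ext i j
    have := congrFun ((key (Pi.single j 1)).1) i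
    rw [Matrix.mulVec_single] at this
    simpa [Matrix.one_apply, Pi.single_apply, eq_comm] using this
  have hW : Wg g = 0 := by
    funext j
    have := (key (Pi.single j 1)).2
    rwa [dotProduct_single_one] at this
  have hr : g.right = 1 := by
    have h1 : ((g.right⁻¹ : GL2) : Matrix (Fin 2) (Fin 2) k) = 1 := by
      have := congrArg Matrix.transpose hB
      rwa [Bg, Matrix.transpose_transpose, Matrix.transpose_one] at this
    have h2 : g.right⁻¹ = 1 := Units.ext h1
    simpa using congrArg (·⁻¹) h2
  have hl : g.left = 1 := by
    have h0 : g.left.toAdd = 0 := by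
      have : Wg g = g.left.toAdd := by
        rw [Wg, hr, inv_one, Units.val_one, Matrix.one_mulVec]
      rw [hW] at this
      exact this.symm
    exact toAdd_eq_zero.mp h0
  exact SemidirectProduct.ext hl hr

end AutExtAux

namespace AutExtAux

variable (k : Type) [Field k]

local notation "Λ" => ExteriorAlgebra k (Fin 2 → k)
local notation "GL2" => Matrix.GeneralLinearGroup (Fin 2) k
local notation "G" => SemidirectProduct (Multiplicative (Fin 2 → k)) GL2 (act k)

variable {k}

lemma mul_decomp (a b c d : k) (v u : Fin 2 → k) :
    (a • (1 : Λ) + ι k v + c • ω k) * (b • (1 : Λ) + ι k u + d • ω k)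
      = (a * b) • (1 : Λ) + ι k (a • u + b • v)
        + (a * d + c * b + (v 0 * u 1 - v 1 * u 0)) • ω k := by
  simp only [add_mul, mul_add, smul_mul_assoc, mul_smul_comm, one_mul, mul_one,
    iota_mul, iota_mul_omega, omega_mul_iota, omega_sq, smul_zero, map_add,
    _root_.map_smul, smul_smul]
  module

lemma omega_ne_zero : (ω k : Λ) ≠ 0 := by
  intro h
  have h2 : (0 : k) • (1 : Λ) + ι k 0 + (1 : k) • ω k = 0 := by
    rw [h]; simp
  exact one_ne_zero (indep h2).2.2

lemma PsiHom_surjective : Function.Surjective (PsiHom (k := k)) := by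
  intro F
  -- decompose the images of the generators
  obtain ⟨a0, u0, c0, h0⟩ := exists_decomp (F (ι k (ee k 0)))
  obtain ⟨a1, u1, c1, h1⟩ := exists_decomp (F (ι k (ee k 1)))
  -- the scalar parts vanish since the images square to zero
  have sq0 : F (ι k (ee k 0)) * F (ι k (ee k 0)) = 0 := by
    rw [← _root_.map_mul, ι_sq_zero, map_zero]
  have sq1 : F (ι k (ee k 1)) * F (ι k (ee k 1)) = 0 := by
    rw [← _root_.map_mul, ι_sq_zero, map_zero]
  rw [h0, mul_decomp] at sq0
  rw [h1, mul_decomp] at sq1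
  have ha0 : a0 = 0 := mul_self_eq_zero.mp (indep sq0).1
  have ha1 : a1 = 0 := mul_self_eq_zero.mp (indep sq1).1
  rw [ha0, zero_smul, zero_add] at h0
  rw [ha1, zero_smul, zero_add] at h1
  -- the matrix and translation parts
  set B : Matrix (Fin 2) (Fin 2) k := Matrix.of (fun i j => ![u0, u1] j i) with hB
  set w : Fin 2 → k := ![c0, c1] with hw
  have hmul : ∀ v : Fin 2 → k, B.mulVec v = v 0 • u0 + v 1 • u1 := by
    intro v
    funext i
    simp [hB, Matrix.mulVec, dotProduct, Fin.sum_univ_two, mul_comm]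
  have hdot : ∀ v : Fin 2 → k, w ⬝ᵥ v = v 0 * c0 + v 1 * c1 := by
    intro v
    simp [hw, dotProduct, Fin.sum_univ_two, mul_comm]
  have hFv : ∀ v : Fin 2 → k, F (ι k v) = ι k (B.mulVec v) + (w ⬝ᵥ v) • ω k := by
    intro v
    conv_lhs => rw [vec_decomp v, LinearMap.map_add, LinearMap.map_smul, LinearMap.map_smul,
      map_add, _root_.map_smul, _root_.map_smul, h0, h1]
    rw [hmul, hdot, LinearMap.map_add, LinearMap.map_smul, LinearMap.map_smul]
    rw [smul_add, smul_add, smul_smul, smul_smul, add_smul]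
    module
  have hAlg : F.toAlgHom = Phi w B := by
    apply ExteriorAlgebra.hom_ext
    apply LinearMap.ext
    intro v
    show F (ι k v) = Phi w B (ι k v)
    rw [hFv, Phi_iota]
  have hFx : ∀ x : Λ, F x = Phi w B x := fun x => by
    rw [← hAlg]; rfl
  -- B has nonzero determinant
  have hFomega : F (ω k) = B.det • ω k := by
    rw [hFx, Phi_omega]
  have hdet : B.det ≠ 0 := by
    intro hd
    rw [hd, zero_smul] at hFomega
    exact omega_ne_zero (F.injective (by rw [hFomega, map_zero]))
  -- build the corresponding group element
  have hu : IsUnit B := (Matrix.isUnit_iff_isUnit_det B).mpr (isUnit_iff_ne_zero.mpr hdet)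
  obtain ⟨uB, huB⟩ := hu
  have huT1 : Bᵀ * ((uB⁻¹ : GL2) : Matrix (Fin 2) (Fin 2) k)ᵀ = 1 := by
    rw [← Matrix.transpose_mul, ← huB, ← Units.val_mul, inv_mul_cancel, Units.val_one,
      Matrix.transpose_one]
  have huT2 : ((uB⁻¹ : GL2) : Matrix (Fin 2) (Fin 2) k)ᵀ * Bᵀ = 1 := by
    rw [← Matrix.transpose_mul, ← huB, ← Units.val_mul, mul_inv_cancel, Units.val_one,
      Matrix.transpose_one]
  set uT : GL2 := ⟨Bᵀ, ((uB⁻¹ : GL2) : Matrix (Fin 2) (Fin 2) k)ᵀ, huT1, huT2⟩ with huT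
  refine ⟨⟨Multiplicative.ofAdd (((uT⁻¹ : GL2) : Matrix (Fin 2) (Fin 2) k).mulVec w),
    uT⁻¹⟩, ?_⟩
  have hBg : Bg (⟨Multiplicative.ofAdd (((uT⁻¹ : GL2) : Matrix (Fin 2) (Fin 2) k).mulVec w),
      uT⁻¹⟩ : G) = B := by
    rw [Bg]
    show (((uT⁻¹)⁻¹ : GL2) : Matrix (Fin 2) (Fin 2) k)ᵀ = B
    rw [inv_inv]
    show (Bᵀ)ᵀ = B
    rw [Matrix.transpose_transpose]
  have hWg : Wg (⟨Multiplicative.ofAdd (((uT⁻¹ : GL2) : Matrix (Fin 2) (Fin 2) k).mulVec w),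
      uT⁻¹⟩ : G) = w := by
    rw [Wg]
    show ((((uT⁻¹)⁻¹ : GL2) : Matrix (Fin 2) (Fin 2) k)).mulVec
      (((uT⁻¹ : GL2) : Matrix (Fin 2) (Fin 2) k).mulVec w) = w
    rw [inv_inv, Matrix.mulVec_mulVec, ← Units.val_mul, mul_inv_cancel, Units.val_one,
      Matrix.one_mulVec]
  apply AlgEquiv.ext
  intro x
  show Psi _ x = F x
  rw [Psi_apply, hBg, hWg, hFx]

end AutExtAux

/-- The group of `k`-algebra automorphisms of the exterior algebra of the `2`-dimensional
`k`-vector space `k²` is isomorphic to the semidirect product `k² ⋊ GL₂(k)`, where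
`B ∈ GL₂(k)` acts on the additive group `k²` by `v ↦ (det B)⁻¹ • (B v)`. -/
theorem aut_exteriorAlgebra_iso_semidirect (k : Type) [Field k] :
    ∃ φ : Matrix.GeneralLinearGroup (Fin 2) k →* MulAut (Multiplicative (Fin 2 → k)),
      (∀ (B : Matrix.GeneralLinearGroup (Fin 2) k) (v : Fin 2 → k),
        φ B (Multiplicative.ofAdd v) = Multiplicative.ofAdd
          (((B : Matrix (Fin 2) (Fin 2) k).det)⁻¹ •
            (B : Matrix (Fin 2) (Fin 2) k).mulVec v)) ∧
      Nonempty ((ExteriorAlgebra k (Fin 2 → k) ≃ₐ[k] ExteriorAlgebra k (Fin 2 → k)) ≃*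
        Multiplicative (Fin 2 → k) ⋊[φ] Matrix.GeneralLinearGroup (Fin 2) k) := by
  refine ⟨AutExtAux.act k, fun B v => rfl, ⟨?_⟩⟩
  exact (MulEquiv.ofBijective AutExtAux.PsiHom
    ⟨AutExtAux.PsiHom_injective, AutExtAux.PsiHom_surjective⟩).symm
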